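/- Work with formal power series over ℝ. Let E ∈ ℝ[[x]] satisfy E = 2·exp( x·E² / (1 + x·E) ) − 1, and let D ∈ ℝ[[x, w]] satisfy D = (1 + w)·exp( x·E·D / (1 + x·E) ) − 1. Suppose B ∈ ℝ[[x, w]] satisfies B(x, 0) = 0 and w·∂B/∂w = x·w·exp( x·E·D / (1 + x·E) ). Then B = x·( D − (x·E/(1 + x·E))·D·(1 + D/2) ). -/

import Mathlib

/-- The formal exponential of a multivariate formal power series.  For a series `S`
with zero constant term this agrees with `Σ_{n≥0} Sⁿ/n!`, since the coefficient of a
monomial `m` in `Sⁿ` vanishes whenever `n` exceeds the total degree of `m`. -/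
noncomputable def formalExp {σ : Type*} (S : MvPowerSeries σ ℝ) : MvPowerSeries σ ℝ :=
  fun m => ∑ n ∈ Finset.range ((m.sum fun _ e => e) + 1),
    MvPowerSeries.coeff (R := ℝ) m (S ^ n) / (n.factorial : ℝ)

/-- The formal partial derivative with respect to the second variable `w` of a
formal power series in `ℝ[[x,w]]`:
`∂_w Σ c_{a,b} xᵃ wᵇ = Σ (b+1)·c_{a,b+1} xᵃ wᵇ`. -/
noncomputable def pderivW (B : MvPowerSeries (Fin 2) ℝ) : MvPowerSeries (Fin 2) ℝ :=
  fun m => ((m 1 : ℝ) + 1) * MvPowerSeries.coeff (R := ℝ) (m + Finsupp.single 1 1) B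

/-!
We work with the Euler operator `θ = w ∂_w`, a derivation of `ℝ[[x,w]]` that kills `x`.
Differentiating the equation for `E` gives `θE · (1 - x·u) = 0` for some series `u`, so
`θE = 0`. Differentiating the equation for `D` then gives
`θD · (1 - c(1 + D)) = w·exp(cD)` with `c = xE/(1+xE)`, from which
`θ(x(D - cD(1 + D/2))) = x·w·exp(cD) = θB`. Both `B` and the right-hand side are divisible
by `w` (for `D` because modulo `w` its equation becomes `D = exp(cD) - 1`, whose only solution
is `0`), and a series divisible by `w` is determined by its image under `θ`.
-/

open Finset

section

variable {A : Type*} [CommSemiring A] [Algebra ℝ A]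

noncomputable def expPartialSum (a : A) (N : ℕ) : A :=
  ∑ n ∈ range (N + 1), (n.factorial : ℝ)⁻¹ • a ^ n

theorem Derivation.map_expPartialSum_succ (D : Derivation ℝ A A) (a : A) (N : ℕ) :
    D (expPartialSum a (N + 1)) = expPartialSum a N * D a := by
  rw [expPartialSum, map_sum, sum_range_succ', expPartialSum, sum_mul]
  simp only [pow_zero, map_smul, D.map_one_eq_zero, smul_zero, add_zero, D.leibniz_pow]
  refine sum_congr rfl fun n _ => ?_
  rw [add_tsub_cancel_right, smul_eq_mul, ← Nat.cast_smul_eq_nsmul ℝ, smul_smul, smul_mul_assoc,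
    Nat.factorial_succ, Nat.cast_mul, mul_inv, mul_right_comm, inv_mul_cancel₀ (by positivity),
    one_mul]

end

namespace MvPowerSeries

variable {σ : Type*}

section CommSemiring

variable {R : Type*} [CommSemiring R]

/-- The Euler operator `X i · ∂/∂X i`; unlike `∂/∂X i` it is diagonal on monomials, which makes
its Leibniz rule a coefficientwise identity. -/
def eulerDeriv (i : σ) : Derivation R (MvPowerSeries σ R) (MvPowerSeries σ R) where
  toFun f := fun m => (m i : R) * coeff m f
  map_add' f g := by ext m; exact mul_add _ _ _
  map_smul' a f := by ext m; exact mul_left_comm _ _ _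
  map_one_eq_zero' := by
    classical
    ext m
    change (m i : R) * coeff m 1 = 0
    rw [coeff_one]
    split_ifs with h <;> simp [h]
  leibniz' f g := by
    classical
    ext m
    change (m i : R) * coeff m (f * g) = coeff m (f * _) + coeff m (g * _)
    rw [mul_comm g, coeff_mul, coeff_mul, coeff_mul, Finset.mul_sum, ← sum_add_distrib]
    refine sum_congr rfl fun p hp => ?_
    change _ = coeff p.1 f * (p.2 i * coeff p.2 g) + (p.1 i * coeff p.1 f) * coeff p.2 g
    rw [← mem_antidiagonal.mp hp, Finsupp.add_apply, Nat.cast_add]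
    ring

theorem coeff_eulerDeriv (i : σ) (f : MvPowerSeries σ R) (m : σ →₀ ℕ) :
    coeff m (eulerDeriv i f) = (m i : R) * coeff m f := rfl

theorem eulerDeriv_X_self (i : σ) : eulerDeriv (R := R) i (X i) = X i := by
  classical
  ext m
  rw [coeff_eulerDeriv, coeff_X]
  split_ifs with h
  · simp [h]
  · rw [mul_zero]

theorem eulerDeriv_X_of_ne {i j : σ} (h : j ≠ i) : eulerDeriv (R := R) i (X j) = 0 := by
  classical
  ext m
  rw [coeff_eulerDeriv, coeff_X, map_zero]
  split_ifs with hm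
  · simp [hm, h]
  · rw [mul_zero]

theorem eulerDeriv_C (i : σ) (a : R) : eulerDeriv i (C a : MvPowerSeries σ R) = 0 :=
  (eulerDeriv i).map_algebraMap a

theorem eq_zero_of_X_dvd_of_eulerDeriv_eq_zero [NoZeroDivisors R] [CharZero R] {i : σ}
    {f : MvPowerSeries σ R} (hdvd : X i ∣ f) (hf : eulerDeriv i f = 0) : f = 0 := by
  ext m
  by_cases hm : m i = 0
  · exact X_dvd_iff.mp hdvd m hm
  · have h := congrArg (coeff m) hf
    rw [coeff_eulerDeriv, map_zero, mul_eq_zero] at h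
    exact h.resolve_left (Nat.cast_ne_zero.mpr hm)

theorem coeff_mul_eq_of_forall_le {f g h : MvPowerSeries σ R} {m : σ →₀ ℕ}
    (hfg : ∀ p ≤ m, coeff p f = coeff p g) : coeff m (f * h) = coeff m (g * h) := by
  classical
  rw [coeff_mul, coeff_mul]
  refine sum_congr rfl fun p hp => ?_
  rw [hfg p.1 (le_iff_exists_add.mpr ⟨p.2, (mem_antidiagonal.mp hp).symm⟩)]

theorem coeff_mul_eq_zero_of_forall_le {f g : MvPowerSeries σ R} {m : σ →₀ ℕ}
    (hf : ∀ p ≤ m, coeff p f = 0) : coeff m (f * g) = 0 := by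
  rw [coeff_mul_eq_of_forall_le (g := 0) (by simpa using hf), zero_mul, map_zero]

theorem coeff_pow_eq_zero_of_degree_lt {S : MvPowerSeries σ R} (hS : constantCoeff S = 0)
    {m : σ →₀ ℕ} {n : ℕ} (h : m.degree < n) : coeff m (S ^ n) = 0 :=
  coeff_of_lt_order ((Nat.cast_lt.mpr h).trans_le (le_order_pow_of_constantCoeff_eq_zero n hS))

end CommSemiring

theorem coeff_formalExp_eq_coeff_expPartialSum {S : MvPowerSeries σ ℝ} (hS : constantCoeff S = 0)
    {m : σ →₀ ℕ} {N : ℕ} (hN : m.degree ≤ N) :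
    coeff m (formalExp S) = coeff m (expPartialSum S N) := by
  change ∑ n ∈ range (m.degree + 1), coeff m (S ^ n) / (n.factorial : ℝ) = _
  rw [sum_subset (range_subset_range.mpr (by omega : m.degree + 1 ≤ N + 1))]
  · simp only [expPartialSum, map_sum, coeff_smul, div_eq_inv_mul]
  · intro n _ hn
    rw [coeff_pow_eq_zero_of_degree_lt hS (by simpa using hn), zero_div]

theorem eulerDeriv_formalExp (i : σ) {S : MvPowerSeries σ ℝ} (hS : constantCoeff S = 0) :
    eulerDeriv i (formalExp S) = formalExp S * eulerDeriv i S := by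
  ext m
  have hle : ∀ p ≤ m, coeff p (formalExp S) = coeff p (expPartialSum S m.degree) :=
    fun p hp => coeff_formalExp_eq_coeff_expPartialSum hS (Finsupp.degree_mono hp)
  rw [coeff_eulerDeriv, coeff_formalExp_eq_coeff_expPartialSum hS (Nat.le_succ _),
    ← coeff_eulerDeriv, Derivation.map_expPartialSum_succ, coeff_mul_eq_of_forall_le hle]

theorem coeff_formalExp_of_forall_le {S : MvPowerSeries σ ℝ} {m : σ →₀ ℕ}
    (hS : ∀ p ≤ m, coeff p S = 0) : coeff m (formalExp S) = coeff m 1 := by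
  change ∑ n ∈ range (m.degree + 1), coeff m (S ^ n) / (n.factorial : ℝ) = _
  rw [sum_range_succ', sum_eq_zero fun n _ => ?_]
  · simp
  · rw [pow_succ, mul_comm, coeff_mul_eq_zero_of_forall_le hS, zero_div]

theorem X_dvd_of_eq_one_add_X_mul_formalExp_sub_one {i : σ} {c D : MvPowerSeries σ ℝ}
    (hc : constantCoeff c = 0) (hD : D = (1 + X i) * formalExp (c * D) - 1) : X i ∣ D := by
  classical
  refine X_dvd_iff.mpr fun m => ?_
  induction m using WellFoundedLT.induction with
  | _ m ih =>
  intro hm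
  have hcD : ∀ p ≤ m, coeff p (c * D) = 0 := by
    intro p hp
    rw [coeff_mul]
    refine sum_eq_zero fun ab hab => ?_
    rw [HasAntidiagonal.mem_antidiagonal] at hab
    rcases eq_or_ne ab.1 0 with h0 | h0
    · rw [h0, coeff_zero_eq_constantCoeff_apply, hc, zero_mul]
    · have hlt : ab.2 < m :=
        (lt_add_of_pos_left ab.2 (pos_iff_ne_zero.mpr h0)).trans_le (hab ▸ hp)
      rw [ih ab.2 hlt (Nat.eq_zero_of_le_zero (hm ▸ hlt.le i)), mul_zero]
  have hwU : coeff m (X i * formalExp (c * D)) = 0 := X_dvd_iff.mp (dvd_mul_right _ _) m hm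
  rw [hD, map_sub, add_mul, one_mul, map_add, hwU, coeff_formalExp_of_forall_le hcD, add_zero,
    sub_self]

theorem eulerDeriv_mul_one_sub_eq_X_mul_formalExp {i : σ} {c D : MvPowerSeries σ ℝ}
    (hc : eulerDeriv i c = 0) (hc0 : constantCoeff c = 0)
    (hD : D = (1 + X i) * formalExp (c * D) - 1) :
    eulerDeriv i D * (1 - c * (1 + D)) = X i * formalExp (c * D) := by
  have h := congrArg (eulerDeriv i) hD
  rw [map_sub, Derivation.map_one_eq_zero, Derivation.leibniz, map_add,
    Derivation.map_one_eq_zero, eulerDeriv_X_self, eulerDeriv_formalExp i (by simp [hc0]),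
    Derivation.leibniz, hc] at h
  simp only [smul_eq_mul] at h
  linear_combination h - c * eulerDeriv i D * hD

theorem eulerDeriv_eq_zero_of_eq_two_mul_formalExp_sub_one {i j : σ} (hij : j ≠ i)
    {E : MvPowerSeries σ ℝ} (hE : E = 2 * formalExp (X j * E ^ 2 * (1 + X j * E)⁻¹) - 1) :
    eulerDeriv i E = 0 := by
  set T := (1 + X j * E)⁻¹
  have hTinv : T * (1 + X j * E) = 1 := MvPowerSeries.inv_mul_cancel _ (by simp)
  have hθT : eulerDeriv i T = -(T ^ 2 * X j * eulerDeriv i E) := by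
    rw [(eulerDeriv i).leibniz_of_mul_eq_one hTinv]
    simp [eulerDeriv_X_of_ne hij]
    ring
  have hθ2 : eulerDeriv i (2 : MvPowerSeries σ ℝ) = 0 := by
    rw [← map_ofNat C 2]
    exact eulerDeriv_C i 2
  have h := congrArg (eulerDeriv i) hE
  simp only [map_sub, Derivation.map_one_eq_zero, Derivation.leibniz, Derivation.leibniz_pow,
    eulerDeriv_formalExp i (S := X j * E ^ 2 * T) (by simp), eulerDeriv_X_of_ne hij, hθT, hθ2,
    smul_eq_mul, nsmul_eq_mul, Nat.cast_ofNat, Nat.add_one_sub_one, pow_one] at h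
  have key : eulerDeriv i E *
      (1 - 2 * formalExp (X j * E ^ 2 * T) * X j * E * T * (2 - X j * E * T)) = 0 := by
    linear_combination h
  refine (IsUnit.mul_left_eq_zero ?_).mp key
  exact isUnit_iff_constantCoeff.mpr (by simp)

end MvPowerSeries

open MvPowerSeries

theorem X_one_mul_pderivW (f : MvPowerSeries (Fin 2) ℝ) : X 1 * pderivW f = eulerDeriv 1 f := by
  ext m
  rw [coeff_eulerDeriv, X, coeff_monomial_mul, one_mul]
  split_ifs with h
  · have h1 : 1 ≤ m 1 := Finsupp.single_le_iff.mp h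
    change (((m - Finsupp.single (1 : Fin 2) 1 : Fin 2 →₀ ℕ) 1 : ℝ) + 1) *
      coeff (m - _ + _) f = _
    rw [tsub_add_cancel_of_le h, Finsupp.tsub_apply, Finsupp.single_eq_same, Nat.cast_sub h1,
      Nat.cast_one, sub_add_cancel]
  · have h0 : m 1 = 0 := by simpa [Finsupp.single_le_iff] using h
    rw [h0, Nat.cast_zero, zero_mul]

/-- Lemma 4.2 (rooted 2-connected SP graphs):  if `B(x,0) = 0` and
`w·∂B/∂w = x·w·exp(x·E·D/(1+x·E))`, then
`B = x·(D − (xE/(1+xE))·D·(1 + D/2))`, in `ℝ[[x,w]]`. -/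
theorem rooted_two_connected_sp_generating_function
    (x w : MvPowerSeries (Fin 2) ℝ)
    (hx : x = MvPowerSeries.X 0) (hw : w = MvPowerSeries.X 1)
    (E D B : MvPowerSeries (Fin 2) ℝ)
    (hE : E = 2 * formalExp (x * E ^ 2 * (1 + x * E)⁻¹) - 1)
    (hD : D = (1 + w) * formalExp (x * E * D * (1 + x * E)⁻¹) - 1)
    -- `B(x,0) = 0`: all coefficients with `w`-exponent zero vanish
    (hB0 : ∀ m : Fin 2 →₀ ℕ, m 1 = 0 → MvPowerSeries.coeff (R := ℝ) m B = 0)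
    (hBw : w * pderivW B = x * w * formalExp (x * E * D * (1 + x * E)⁻¹)) :
    B = x * (D - x * E * (1 + x * E)⁻¹ * D *
      (1 + MvPowerSeries.C (σ := Fin 2) (R := ℝ) (1 / 2) * D)) := by
  subst hx hw
  set c := X 0 * E * (1 + X 0 * E)⁻¹ with hc
  rw [show X 0 * E * D * (1 + X 0 * E)⁻¹ = c * D by ring] at hD hBw
  have hθE : eulerDeriv 1 E = 0 :=
    eulerDeriv_eq_zero_of_eq_two_mul_formalExp_sub_one (by decide) hE
  have hθc : eulerDeriv 1 c = 0 := by
    have hinv : (1 + X 0 * E)⁻¹ * (1 + X 0 * E) = 1 := MvPowerSeries.inv_mul_cancel _ (by simp)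
    simp [hc, (eulerDeriv 1).leibniz_of_mul_eq_one hinv, eulerDeriv_X_of_ne, hθE]
  have hc0 : constantCoeff c = 0 := by simp [hc]
  have hθD := eulerDeriv_mul_one_sub_eq_X_mul_formalExp hθc hc0 hD
  have hθB : eulerDeriv 1 B = X 0 * X 1 * formalExp (c * D) := by rw [← X_one_mul_pderivW, hBw]
  have hhalf : C (1 / 2) * 2 = (1 : MvPowerSeries (Fin 2) ℝ) := by
    rw [← map_ofNat C 2, ← map_mul]; norm_num
  refine sub_eq_zero.mp (eq_zero_of_X_dvd_of_eulerDeriv_eq_zero (i := 1) ?_ ?_)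
  · refine dvd_sub (X_dvd_iff.mpr hB0) (Dvd.dvd.mul_left ?_ _)
    rw [show D - c * D * (1 + C (1 / 2) * D) = D * (1 - c * (1 + C (1 / 2) * D)) by ring]
    exact (X_dvd_of_eq_one_add_X_mul_formalExp_sub_one hc0 hD).mul_right _
  · simp only [map_sub, map_add, Derivation.leibniz, Derivation.map_one_eq_zero, eulerDeriv_C,
      eulerDeriv_X_of_ne (show (0 : Fin 2) ≠ 1 by decide), hθc, hθB, smul_eq_mul]
    linear_combination -X 0 * hθD + X 0 * c * D * eulerDeriv 1 D * hhalf
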